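/- Let n be a positive integer and let λ be a real number with λ > n²π², cos(√(λ−n²π²)) ≠ 0 and F(λ) = 0. Then F has derivative at λ equal to −tanh²(√(λ+n²π²))/(λ+n²π²) + (n²π²/(λ²−n⁴π⁴))·( tanh(√(λ+n²π²))/√(λ+n²π²) − 1 ). -/

import Mathlib

/-!
Both terms of `F` have the shape `f (√x) / √x`, whose derivative is
`(f' (√x) - f (√x) / √x) / (2x)`. At a zero of `F` the two quotients share a common value `q`,
so `tanh² = (λ + n²π²) q²` and `sec² = 1 + tan² = 1 + (λ - n²π²) q²`; substituting these, the
two terms combine into the stated formula.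
-/

open Real

theorem Real.hasDerivAt_tanh (x : ℝ) : HasDerivAt tanh (1 - tanh x ^ 2) x := by
  have hcosh : cosh x ≠ 0 := (cosh_pos x).ne'
  have h := (hasDerivAt_sinh x).div (hasDerivAt_cosh x) hcosh
  rw [show sinh / cosh = tanh from funext fun y => (tanh_eq_sinh_div_cosh y).symm] at h
  refine h.congr_deriv ?_
  rw [tanh_eq_sinh_div_cosh]
  field_simp

theorem HasDerivAt.comp_sqrt_div_sqrt {f : ℝ → ℝ} {f' x : ℝ} (hx : 0 < x)
    (hf : HasDerivAt f f' (√x)) :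
    HasDerivAt (fun y => f (√y) / √y) ((f' - f (√x) / √x) / (2 * x)) x := by
  have hs : 0 < √x := sqrt_pos.2 hx
  have hsqrt : HasDerivAt (√·) (1 / (2 * √x)) x := hasDerivAt_sqrt hx.ne'
  refine ((hf.comp x hsqrt).div hsqrt hs.ne').congr_deriv ?_
  rw [Function.comp_apply, ← sq_sqrt hx.le, sqrt_sq hs.le]
  field_simp

theorem stmt_5_general (n : ℕ) (lam : ℝ) (hlam : lam > (n : ℝ)^2 * π^2)
    (hcos : Real.cos (Real.sqrt (lam - (n : ℝ)^2 * π^2)) ≠ 0)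
    (hF : Real.tanh (Real.sqrt (lam + (n : ℝ)^2 * π^2)) / Real.sqrt (lam + (n : ℝ)^2 * π^2)
        - Real.tan (Real.sqrt (lam - (n : ℝ)^2 * π^2)) / Real.sqrt (lam - (n : ℝ)^2 * π^2) = 0) :
    HasDerivAt
      (fun l : ℝ =>
        Real.tanh (Real.sqrt (l + (n : ℝ)^2 * π^2)) / Real.sqrt (l + (n : ℝ)^2 * π^2)
          - Real.tan (Real.sqrt (l - (n : ℝ)^2 * π^2)) / Real.sqrt (l - (n : ℝ)^2 * π^2))
      (-(Real.tanh (Real.sqrt (lam + (n : ℝ)^2 * π^2)))^2 / (lam + (n : ℝ)^2 * π^2)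
        + ((n : ℝ)^2 * π^2 / (lam^2 - (n : ℝ)^4 * π^4))
          * (Real.tanh (Real.sqrt (lam + (n : ℝ)^2 * π^2)) / Real.sqrt (lam + (n : ℝ)^2 * π^2) - 1))
      lam := by
  set a : ℝ := (n : ℝ)^2 * π^2
  have hminus : 0 < lam - a := by linarith
  have hplus : 0 < lam + a := by linarith [show 0 ≤ a by positivity]
  refine (((hasDerivAt_tanh _).comp_sqrt_div_sqrt hplus).comp_add_const lam a |>.sub
    (((hasDerivAt_tan hcos).comp_sqrt_div_sqrt hminus).comp_sub_const lam a)).congr_deriv ?_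
  set q := tanh √(lam + a) / √(lam + a)
  have htanh : tanh √(lam + a) ^ 2 = (lam + a) * q ^ 2 := by
    rw [div_pow, sq_sqrt hplus.le]
    field_simp
  have htan : tan √(lam - a) ^ 2 = (lam - a) * q ^ 2 := by
    rw [sub_eq_zero.1 hF, div_pow, sq_sqrt hminus.le]
    field_simp
  have hsec : 1 / cos √(lam - a) ^ 2 = 1 + tan √(lam - a) ^ 2 := by
    rw [one_div, ← inv_one_add_tan_sq hcos, inv_inv]
  rw [← sub_eq_zero.1 hF, hsec, htanh, htan,
    show lam ^ 2 - (n : ℝ) ^ 4 * π ^ 4 = (lam + a) * (lam - a) by ring]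
  field_simp
  ring

/-- Let `n` be a positive integer and `λ > n²π²` with `cos(√(λ−n²π²)) ≠ 0` and `F(λ) = 0`,
where `F(μ) = tanh(√(μ+n²π²))/√(μ+n²π²) − tan(√(μ−n²π²))/√(μ−n²π²)`. Then `F` has
derivative at `λ` equal to
`−tanh²(√(λ+n²π²))/(λ+n²π²) + (n²π²/(λ²−n⁴π⁴))·(tanh(√(λ+n²π²))/√(λ+n²π²) − 1)`. -/
theorem stmt_5 (n : ℕ) (hn : 0 < n) (lam : ℝ) (hlam : lam > (n : ℝ)^2 * π^2)
    (hcos : Real.cos (Real.sqrt (lam - (n : ℝ)^2 * π^2)) ≠ 0)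
    (hF : Real.tanh (Real.sqrt (lam + (n : ℝ)^2 * π^2)) / Real.sqrt (lam + (n : ℝ)^2 * π^2)
        - Real.tan (Real.sqrt (lam - (n : ℝ)^2 * π^2)) / Real.sqrt (lam - (n : ℝ)^2 * π^2) = 0) :
    HasDerivAt
      (fun l : ℝ =>
        Real.tanh (Real.sqrt (l + (n : ℝ)^2 * π^2)) / Real.sqrt (l + (n : ℝ)^2 * π^2)
          - Real.tan (Real.sqrt (l - (n : ℝ)^2 * π^2)) / Real.sqrt (l - (n : ℝ)^2 * π^2))
      (-(Real.tanh (Real.sqrt (lam + (n : ℝ)^2 * π^2)))^2 / (lam + (n : ℝ)^2 * π^2)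
        + ((n : ℝ)^2 * π^2 / (lam^2 - (n : ℝ)^4 * π^4))
          * (Real.tanh (Real.sqrt (lam + (n : ℝ)^2 * π^2)) / Real.sqrt (lam + (n : ℝ)^2 * π^2) - 1))
      lam :=
  stmt_5_general n lam hlam hcos hF
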